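/- arXiv:2108.07718 — 9 statements merged into one kernel-verified Lean document; each statement's English description precedes it below -/
import Mathlib

section
/- Let a : ℕ → ℝ be the sequence of nested radicals defined by a₀ = 0 and aₖ = √(2 + aₖ₋₁) for k ≥ 1. Then for every integer k ≥ 1, π/4 = 2^(k-1) · arctan( √(2 - aₖ₋₁) / aₖ ). -/
/-! By the half-angle formula, `aₖ = 2 cos (π / 2^(k+1))` and `√(2 - aₖ₋₁) = 2 sin (π / 2^(k+1))`,
so the argument of `arctan` is `tan (π / 2^(k+1))`. -/

open Real

theorem eq_sqrtTwoAddSeries {a : ℕ → ℝ} (ha : ∀ n, a (n + 1) = √(2 + a n)) :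
    ∀ n, a n = sqrtTwoAddSeries (a 0) n
  | 0 => rfl
  | n + 1 => by rw [ha, eq_sqrtTwoAddSeries ha n, sqrtTwoAddSeries]

theorem tan_pi_over_two_pow_succ_succ (n : ℕ) :
    tan (π / 2 ^ (n + 2)) = √(2 - sqrtTwoAddSeries 0 n) / sqrtTwoAddSeries 0 (n + 1) := by
  rw [tan_eq_sin_div_cos, sin_pi_over_two_pow_succ, cos_pi_over_two_pow]
  field_simp

theorem arctan_sqrt_two_sub_sqrtTwoAddSeries_div (n : ℕ) :
    arctan (√(2 - sqrtTwoAddSeries 0 n) / sqrtTwoAddSeries 0 (n + 1)) = π / 2 ^ (n + 2) := by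
  have hpos : 0 < π / 2 ^ (n + 2) := by positivity
  have hlt : π / 2 ^ (n + 2) < π / 2 := by
    refine div_lt_div_of_pos_left pi_pos two_pos ?_
    calc (2 : ℝ) < 2 ^ 2 := by norm_num
      _ ≤ 2 ^ (n + 2) := pow_le_pow_right₀ one_le_two (Nat.le_add_left 2 n)
  rw [← tan_pi_over_two_pow_succ_succ, arctan_tan (by linarith [pi_pos]) hlt]

theorem pi_div_four_nested_radicals (a : ℕ → ℝ) (h0 : a 0 = 0)
    (ha : ∀ k : ℕ, 1 ≤ k → a k = Real.sqrt (2 + a (k - 1))) :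
    ∀ k : ℕ, 1 ≤ k →
      Real.pi / 4 =
        2 ^ (k - 1) * Real.arctan (Real.sqrt (2 - a (k - 1)) / a k) := by
  have a_eq : ∀ n, a n = sqrtTwoAddSeries 0 n := by
    simpa [h0] using eq_sqrtTwoAddSeries fun n => ha (n + 1) n.succ_pos
  rintro (_ | n) hk
  · omega
  rw [Nat.add_sub_cancel, a_eq, a_eq, arctan_sqrt_two_sub_sqrtTwoAddSeries_div, pow_succ, pow_succ]
  field_simp
  ring
end

section
/- Let β be a real number, let k ≥ 1 be an integer, and define σ, τ : ℕ → ℝ by σ₁ = (β² - 1)/(β² + 1), τ₁ = 2β/(β² + 1), and for n ≥ 2, σₙ = σₙ₋₁² - τₙ₋₁², τₙ = 2σₙ₋₁τₙ₋₁. If τₖ ≠ 1, then the complex number 2/ ( ((β + i)/(β - i))^(2^(k-1)) - i ) - i equals the real number σₖ/(1 - τₖ). -/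
/-!
The Cayley transform `z = (β + i)/(β - i)` lies on the unit circle, and `σ₁ + τ₁ i` is its
real/imaginary decomposition. The recurrence for `(σₙ, τₙ)` is exactly complex squaring, so
`z ^ 2 ^ (k - 1) = σₖ + τₖ i` with `σₖ² + τₖ² = 1`. For a point `s + t i ≠ i` of the unit circle,
`2 / (s + t i - i) - i = s / (1 - t)` is the stereographic projection from `i`.
-/

namespace Complex

theorem ofReal_add_ofReal_mul_I_sq (a b : ℝ) :
    ((a : ℂ) + b * I) ^ 2 = ((a ^ 2 - b ^ 2 : ℝ) : ℂ) + ((2 * a * b : ℝ) : ℂ) * I := by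
  push_cast
  linear_combination (b : ℂ) ^ 2 * I_sq

theorem pow_two_pow_eq_of_sq_recurrence (σ τ : ℕ → ℝ)
    (hσ : ∀ n : ℕ, 2 ≤ n → σ n = σ (n - 1) ^ 2 - τ (n - 1) ^ 2)
    (hτ : ∀ n : ℕ, 2 ≤ n → τ n = 2 * σ (n - 1) * τ (n - 1)) {n : ℕ} (hn : 1 ≤ n) :
    ((σ 1 : ℂ) + τ 1 * I) ^ 2 ^ (n - 1) = σ n + τ n * I := by
  induction n, hn using Nat.le_induction with
  | base => simp
  | succ m hm ih =>
    obtain ⟨j, rfl⟩ := Nat.exists_eq_add_of_le' hm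
    rw [hσ (j + 2) (by omega), hτ (j + 2) (by omega), Nat.add_sub_cancel, pow_succ, pow_mul,
      ← ofReal_add_ofReal_mul_I_sq]
    simpa using congrArg (· ^ 2) ih

theorem ofReal_sub_I_ne_zero (β : ℝ) : (β : ℂ) - I ≠ 0 :=
  fun h => by simpa using congrArg im h

theorem cayley_eq (β : ℝ) :
    ((β : ℂ) + I) / (β - I) =
      (((β ^ 2 - 1) / (β ^ 2 + 1) : ℝ) : ℂ) + ((2 * β / (β ^ 2 + 1) : ℝ) : ℂ) * I := by
  have hsq : (β : ℂ) ^ 2 + 1 ≠ 0 := by exact_mod_cast (by positivity : β ^ 2 + 1 ≠ 0)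
  rw [div_eq_iff (ofReal_sub_I_ne_zero β)]
  push_cast
  field_simp
  linear_combination 2 * (β : ℂ) * I_sq

theorem normSq_cayley (β : ℝ) : normSq (((β : ℂ) + I) / (β - I)) = 1 := by
  rw [map_div₀, div_eq_one_iff_eq (normSq_eq_zero.not.mpr (ofReal_sub_I_ne_zero β))]
  simp [normSq_apply]

theorem two_div_sub_I_sub_I {s t : ℝ} (hst : s ^ 2 + t ^ 2 = 1) (ht : t ≠ 1) :
    2 / ((s : ℂ) + t * I - I) - I = ((s / (1 - t) : ℝ) : ℂ) := by
  have hden : (s : ℂ) + t * I - I ≠ 0 :=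
    fun h => ht (sub_eq_zero.mp (by simpa using congrArg im h))
  have h1t : (1 : ℂ) - t ≠ 0 := by exact_mod_cast sub_ne_zero.mpr ht.symm
  have hst' : (s : ℂ) ^ 2 + (t : ℂ) ^ 2 = 1 := by exact_mod_cast hst
  push_cast
  field_simp
  linear_combination (1 - 2 * (t : ℂ) + (t : ℂ) ^ 2) * I_sq - hst'

end Complex

open Complex in
theorem beta_two_formula (β : ℝ) (k : ℕ) (hk : 1 ≤ k) (σ τ : ℕ → ℝ)
    (hσ1 : σ 1 = (β ^ 2 - 1) / (β ^ 2 + 1))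
    (hτ1 : τ 1 = 2 * β / (β ^ 2 + 1))
    (hσ : ∀ n : ℕ, 2 ≤ n → σ n = σ (n - 1) ^ 2 - τ (n - 1) ^ 2)
    (hτ : ∀ n : ℕ, 2 ≤ n → τ n = 2 * σ (n - 1) * τ (n - 1))
    (hτk : τ k ≠ 1) :
    2 / ((((β : ℂ) + I) / ((β : ℂ) - I)) ^ (2 ^ (k - 1)) - I) - I =
      ((σ k / (1 - τ k) : ℝ) : ℂ) := by
  have hpow : (((β : ℂ) + I) / (β - I)) ^ 2 ^ (k - 1) = σ k + τ k * I := by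
    rw [cayley_eq, ← hσ1, ← hτ1]
    exact pow_two_pow_eq_of_sq_recurrence σ τ hσ hτ hk
  have hunit : σ k ^ 2 + τ k ^ 2 = 1 := by
    rw [← normSq_add_mul_I, ← hpow, map_pow, normSq_cayley, one_pow]
  rw [hpow]
  exact two_div_sub_I_sub_I hunit hτk
end

section
/- The two-term Machin-like formula: π/4 = 32·arctan(1/40) - arctan( 38035138859000075702655846657186322249216830232319 / 2634699316100146880926635665506082395762836079845121 ). -/
open Real

/- Doubling the angle five times with `tan 2θ = 2 tan θ / (1 - tan² θ)` keeps the tangent inside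
`(-1, 1)` before each step (it grows `1/40 → 80/1599 → … → 0.42…`), so `32 arctan (1/40) = arctan a`
for an explicit rational `a`, and the subtraction formula for `arctan` yields
`(a - b) / (1 + a b) = 1 = tan (π/4)`. -/
theorem two_term_machin_like_k6 :
    Real.pi / 4 =
      32 * Real.arctan (1 / 40) -
        Real.arctan (38035138859000075702655846657186322249216830232319 /
          2634699316100146880926635665506082395762836079845121) := by
  rw [show 32 * arctan _ = 2 * (2 * (2 * (2 * (2 * _)))) by ring, two_mul_arctan, two_mul_arctan,
    two_mul_arctan, two_mul_arctan, two_mul_arctan, ← arctan_one, eq_sub_iff_add_eq, arctan_add]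
    <;> norm_num
end

section
/- The three-term Machin-like formula: π/4 = 32·arctan(1/40) - arctan(1/70) - arctan( 27760404029858418259273600496960161682342036417209 / 184466987265869281740567152432082954025647742419390789 ). -/
/-! Doubling `arctan (1/40)` five times with `2 arctan x = arctan (2x / (1 - x²))` and then
subtracting with `arctan x - arctan y = arctan ((x - y) / (1 + xy))` collapses the right-hand side
to `arctan 1`; every argument along the way is an explicit rational, so the side conditions and
the final identity are exact rational arithmetic. -/

open Real

theorem Real.arctan_sub {x y : ℝ} (h : -1 < x * y) :
    arctan x - arctan y = arctan ((x - y) / (1 + x * y)) := by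
  rw [sub_eq_add_neg, ← arctan_neg, arctan_add (by linarith), mul_neg, sub_neg_eq_add,
    ← sub_eq_add_neg]

theorem thirty_two_mul_arctan_one_div_forty :
    32 * arctan (1 / 40) =
      arctan (1336367227479573478314645756081634359006026455038720 /
        1298332088620573402611989909424448036756809624806401) := by
  rw [show (32 : ℝ) * arctan (1 / 40) = 2 * (2 * (2 * (2 * (2 * arctan (1 / 40))))) by ring]
  repeat rw [two_mul_arctan (by norm_num) (by norm_num)]
  norm_num

theorem three_term_machin_like :
    Real.pi / 4 =
      32 * Real.arctan (1 / 40) - Real.arctan (1 / 70) -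
        Real.arctan (27760404029858418259273600496960161682342036417209 /
          184466987265869281740567152432082954025647742419390789) := by
  rw [thirty_two_mul_arctan_one_div_forty, arctan_sub (by norm_num), arctan_sub (by norm_num),
    ← arctan_one]
  norm_num
end

section
/- The four-term Machin-like formula: π/4 = 32·arctan(1/40) - arctan(1/70) - arctan(1/6645) - arctan( 448756269953796152961435108660176757544786481508 / 612891579071052703512243493592395863230295465359444105057 ). -/
/-!
Doubling `arctan (1/40)` five times with `tan 2θ = 2t / (1 - t²)` gives
`32 · arctan (1/40) = arctan r` for an explicit rational `r`; no branch of `arctan` is crossed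
because every intermediate tangent lies in `(-1, 1)`. Three applications of the addition formula
show that `arctan 1 + arctan (1/70) + arctan (1/6645)` plus the last arctangent of the formula
is the same `arctan r`.
-/

open Real

noncomputable def tanDouble (t : ℝ) : ℝ := 2 * t / (1 - t ^ 2)

theorem two_pow_mul_arctan (x : ℝ) (n : ℕ) (h : ∀ k < n, |tanDouble^[k] x| < 1) :
    2 ^ n * arctan x = arctan (tanDouble^[n] x) := by
  induction n with
  | zero => simp
  | succ n ih =>
    obtain ⟨hlo, hhi⟩ := abs_lt.mp (h n n.lt_succ_self)
    rw [pow_succ', mul_assoc, ih fun k hk => h k (hk.trans n.lt_succ_self),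
      two_mul_arctan hlo hhi, Function.iterate_succ_apply', tanDouble]

theorem four_term_machin_like :
    Real.pi / 4 =
      32 * Real.arctan (1 / 40) - Real.arctan (1 / 70) - Real.arctan (1 / 6645) -
        Real.arctan (448756269953796152961435108660176757544786481508 /
          612891579071052703512243493592395863230295465359444105057) := by
  have hdouble : 32 * arctan (1 / 40) = arctan (tanDouble^[5] (1 / 40)) := by
    rw [← two_pow_mul_arctan _ 5]
    · norm_num
    · intro k hk
      interval_cases k <;> norm_num [tanDouble, abs_lt]
  have hsum : arctan 1 + arctan (1 / 70) + arctan (1 / 6645) +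
      arctan (448756269953796152961435108660176757544786481508 /
        612891579071052703512243493592395863230295465359444105057) =
      arctan (tanDouble^[5] (1 / 40)) := by
    rw [arctan_add, arctan_add, arctan_add] <;> norm_num [tanDouble]
  linarith [arctan_one]
end

section
/- The five-term Machin-like formula: π/4 = 32·arctan(1/40) - arctan(1/70) - arctan(1/6645) - arctan(1/1365756025) - arctan( 374870864016658098706770220951460879098657980643 / 837060366788054133363141482594659697353287103005016334677117199933 ). -/
/-!
For `a > 0`, `arctan (b / a)` is the argument of the Gaussian integer `a + b i`, so multiplying
Gaussian integers adds these arctangents as long as every partial product stays in the right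
half-plane (then no multiple of `π` can appear). The formula holds because
`(40 + i)^32 (70 - i) (6645 - i) (1365756025 - i) (D - N i)`, with `N / D` the last argument, has
equal positive real and imaginary parts, i.e. it is a positive multiple of `1 + i`, whose argument
is `π / 4`.
-/

open Real

theorem arctan_div_add_arctan_div {a b c d : ℝ} (ha : 0 < a) (hc : 0 < c) (h : b * d < a * c) :
    arctan (b / a) + arctan (d / c) = arctan ((a * d + b * c) / (a * c - b * d)) := by
  have hac : 0 < a * c := mul_pos ha hc
  rw [arctan_add (by rw [div_mul_div_comm, div_lt_one hac]; exact h)]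
  congr 1
  field_simp
  ring

namespace GaussianInt

theorem arctan_im_div_re_mul {z w : GaussianInt} (hz : 0 < z.re) (hw : 0 < w.re)
    (hzw : 0 < (z * w).re) :
    arctan ((z * w).im / (z * w).re : ℝ) = arctan (z.im / z.re : ℝ) + arctan (w.im / w.re : ℝ) := by
  have him_mul_im : z.im * w.im < z.re * w.re := by
    simp only [Zsqrtd.re_mul] at hzw
    linarith
  rw [arctan_div_add_arctan_div (by exact_mod_cast hz) (by exact_mod_cast hw)
    (by exact_mod_cast him_mul_im)]
  simp only [Zsqrtd.re_mul, Zsqrtd.im_mul]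
  push_cast
  ring_nf

theorem arctan_im_div_re_mul_prod {z : GaussianInt} {l : List GaussianInt}
    (hl : ∀ w ∈ l, 0 < w.re) (hscan : ∀ w ∈ l.scanl (· * ·) z, 0 < w.re) :
    arctan ((z * l.prod).im / (z * l.prod).re : ℝ) =
      arctan (z.im / z.re : ℝ) + (l.map fun w => arctan (w.im / w.re : ℝ)).sum := by
  induction l generalizing z with
  | nil => simp
  | cons w l ih =>
    simp only [List.scanl_cons, List.mem_cons, forall_eq_or_imp] at hl hscan
    have hzw : 0 < (z * w).re := by cases l <;> simp_all
    rw [List.prod_cons, ← mul_assoc, ih hl.2 hscan.2, arctan_im_div_re_mul hscan.1 hl.1 hzw,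
      List.map_cons, List.sum_cons, add_assoc]

end GaussianInt

theorem five_term_machin_like :
    Real.pi / 4 =
      32 * Real.arctan (1 / 40) - Real.arctan (1 / 70) - Real.arctan (1 / 6645) -
        Real.arctan (1 / 1365756025) -
        Real.arctan (374870864016658098706770220951460879098657980643 /
          837060366788054133363141482594659697353287103005016334677117199933) := by
  let factors : List GaussianInt :=
    List.replicate 31 ⟨40, 1⟩ ++ [⟨70, -1⟩, ⟨6645, -1⟩, ⟨1365756025, -1⟩,
      ⟨837060366788054133363141482594659697353287103005016334677117199933,
        -374870864016658098706770220951460879098657980643⟩]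
  let p : GaussianInt := ⟨40, 1⟩ * factors.prod
  have hsum :=
    GaussianInt.arctan_im_div_re_mul_prod (z := ⟨40, 1⟩) (l := factors) (by decide) (by decide)
  have him : p.im = p.re := by decide
  have hre : p.re ≠ 0 := by decide
  have hp : (p.im / p.re : ℝ) = 1 := by
    rw [him]
    exact div_self (by exact_mod_cast hre)
  rw [hp, arctan_one] at hsum
  simp only [factors, List.map_append, List.map_replicate, List.sum_append, List.sum_replicate,
    List.map_cons, List.map_nil, List.sum_cons, List.sum_nil, nsmul_eq_mul] at hsum
  norm_num [neg_div, arctan_neg] at hsum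
  linarith
end

section
/- The two-term Machin-like formula for k = 4: π/4 = 8·arctan(1/10) - arctan( 1758719 / 147153121 ). -/
/-! Three applications of the double-angle formula `2 arctan t = arctan (2t / (1 - t²))` give
`8 arctan (1/10) = arctan (74455920 / 72697201)`, and the addition formula gives
`arctan 1 + arctan (1758719 / 147153121) = arctan (74455920 / 72697201)` as well. -/

open Real

theorem eight_mul_arctan_one_div_ten :
    8 * arctan (1 / 10) = arctan (74455920 / 72697201) := by
  have h₁ : 2 * arctan (1 / 10) = arctan (20 / 99) := by
    rw [two_mul_arctan] <;> norm_num
  have h₂ : 2 * arctan (20 / 99) = arctan (3960 / 9401) := by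
    rw [two_mul_arctan] <;> norm_num
  have h₃ : 2 * arctan (3960 / 9401) = arctan (74455920 / 72697201) := by
    rw [two_mul_arctan] <;> norm_num
  rw [← h₃, ← h₂, ← h₁]
  ring

theorem arctan_one_add_arctan_1758719_div_147153121 :
    arctan 1 + arctan (1758719 / 147153121) = arctan (74455920 / 72697201) := by
  rw [arctan_add] <;> norm_num

theorem two_term_machin_like_k4 :
    Real.pi / 4 = 8 * Real.arctan (1 / 10) - Real.arctan (1758719 / 147153121) := by
  rw [eight_mul_arctan_one_div_ten, ← arctan_one_add_arctan_1758719_div_147153121, arctan_one]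
  ring
end

section
/- The four-term Machin-like formula: π/4 = 8·arctan(1/10) - arctan(1/84) - arctan(1/21342) - arctan( 266167 / 263843055464261 ). -/
/-! Doubling three times gives `8 arctan (1/10) = arctan (74455920/72697201)`. Subtracting the
three correction terms one at a time with the subtraction formula for `arctan`, all products
stay above `-1`, and the last term is exactly the one that brings the argument down to `1`. -/

open Real

theorem four_term_machin_like_k4 :
    Real.pi / 4 =
      8 * Real.arctan (1 / 10) - Real.arctan (1 / 84) - Real.arctan (1 / 21342) -
        Real.arctan (266167 / 263843055464261) := by
  symm
  calc 8 * arctan (1 / 10) - arctan (1 / 84) - arctan (1 / 21342) -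
        arctan (266167 / 263843055464261)
      = arctan (74455920 / 72697201) - arctan (1 / 84) - arctan (1 / 21342) -
        arctan (266167 / 263843055464261) := by rw [eight_mul_arctan_one_div_ten]
    _ = arctan (6181600079 / 6181020804) - arctan (1 / 21342) -
        arctan (266167 / 263843055464261) := by rw [arctan_sub (by norm_num)]; norm_num
    _ = arctan (131921527865214 / 131921527599047) -
        arctan (266167 / 263843055464261) := by rw [arctan_sub (by norm_num)]; norm_num
    _ = arctan 1 := by rw [arctan_sub (by norm_num)]; norm_num
    _ = π / 4 := arctan_one
end

section
/- The seven-term Machin-like formula with only integer reciprocals: π/4 = 8·arctan(1/10) - arctan(1/84) - arctan(1/21342) - arctan(1/991268848) - arctan(1/193018008592515208050) - arctan(1/197967899896401851763240424238758988350338) - arctan(1/117573868168175352930277752844194126767991915008537018836932014293678271636885792397). -/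
/-!
Three doublings turn `8 * arctan (1 / 10)` into `arctan (74455920 / 72697201)`, and each
subtraction of an `arctan (1 / n)` keeps the argument a positive rational, so the identity reduces
to exact rational arithmetic ending at `arctan 1 = π / 4`. The `n`'s come from a greedy expansion:
each is the ceiling of the cotangent of what remains of `8 * arctan (1 / 10) - π / 4`, and the
numerator of that tangent drops (1758719, 579275, 266167, 271, 3, 1) until the remainder vanishes.
-/

open Real

theorem arctan_sub_arctan_one_div {x y : ℝ} (hx : 0 ≤ x) (hy : 0 < y) :
    arctan x - arctan (1 / y) = arctan ((x * y - 1) / (y + x)) := by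
  have hxy : x * -(1 / y) < 1 := by nlinarith [one_div_pos.2 hy]
  rw [sub_eq_add_neg, ← arctan_neg, arctan_add hxy, ← mul_div_mul_right _ _ hy.ne']
  congr 2 <;> field_simp <;> ring

theorem seven_term_machin_like_k4 :
    Real.pi / 4 =
      8 * Real.arctan (1 / 10) - Real.arctan (1 / 84) - Real.arctan (1 / 21342) -
        Real.arctan (1 / 991268848) - Real.arctan (1 / 193018008592515208050) -
        Real.arctan (1 / 197967899896401851763240424238758988350338) -
        Real.arctan
          (1 / 117573868168175352930277752844194126767991915008537018836932014293678271636885792397) := by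
  have eight_mul : 8 * arctan (1 / 10) = arctan (74455920 / 72697201) := by
    rw [show (8 : ℝ) * _ = 2 * (2 * (2 * _)) by ring, two_mul_arctan, two_mul_arctan,
      two_mul_arctan] <;> norm_num
  rw [eight_mul]
  norm_num [arctan_sub_arctan_one_div]
end
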